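/- Let G = (V,E) be a finite simple graph, ≺ a linear order on V, and S ⊆ V a set of odd cardinality such that the independence number of G[S] is at most 2. Then every point x of COL≺(G) satisfies the odd-set inequality: the sum of x_a over all arcs a with both endpoints in S is at most (|S|−1)/2. -/

import Mathlib

open scoped Classical

/-- `(u, v)` is an arc of `G` w.r.t. the order `lt`: `u ≺ v` and `uv ∉ E`. -/
abbrev IsArcPair {V : Type*} (G : SimpleGraph V) (lt : V → V → Prop) (p : V × V) : Prop :=
  lt p.1 p.2 ∧ ¬ G.Adj p.1 p.2

/-- The set of arcs of `G` (ordered non-edges), as a type. -/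
abbrev Arc {V : Type*} (G : SimpleGraph V) (lt : V → V → Prop) : Type _ :=
  {p : V × V // IsArcPair G lt p}

/-- A proper coloring of a graph, as a color function. -/
def ProperColoring {W : Type*} (H : SimpleGraph W) (c : W → ℕ) : Prop :=
  ∀ u v, H.Adj u v → c u ≠ c v

/-- `u` is the `lt`-least element of its color class under `c`. -/
def IsClassRep {V : Type*} (lt : V → V → Prop) (c : V → ℕ) (u : V) : Prop :=
  ∀ w, c w = c u → u = w ∨ lt u w

/-- The representative vector of a coloring `c`: `x (u,v) = 1` iff `u` and `v` have the
same color and `u` is the `lt`-least element of that color class. -/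
noncomputable def repVec {V : Type*} (G : SimpleGraph V) (lt : V → V → Prop) (c : V → ℕ) :
    Arc G lt → ℝ := fun a =>
  if c a.1.1 = c a.1.2 ∧ IsClassRep lt c a.1.1 then 1 else 0

/-- The coloring polytope: convex hull of representative vectors of proper colorings. -/
noncomputable def COL {V : Type*} (G : SimpleGraph V) (lt : V → V → Prop) :
    Set (Arc G lt → ℝ) :=
  convexHull ℝ {x | ∃ c : V → ℕ, ProperColoring G c ∧ x = repVec G lt c}

/-- A stable (independent) set of a graph. -/
def IsStableSet {W : Type*} (H : SimpleGraph W) (s : Set W) : Prop :=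
  ∀ a ∈ s, ∀ b ∈ s, ¬ H.Adj a b

/-- The stable set polytope of a graph. -/
noncomputable def STAB {W : Type*} (H : SimpleGraph W) : Set (W → ℝ) :=
  convexHull ℝ {x | ∃ s : Set W, IsStableSet H s ∧ x = s.indicator 1}

/-- The Cornaz–Jost graph `R≺(G)`: vertices are the arcs of `G`; two distinct arcs
`(a,b)` and `(c,d)` are adjacent iff they share an endpoint and it is not the case that
`a = c` and `bd ∉ E`. -/
def RGraph {V : Type*} (G : SimpleGraph V) (lt : V → V → Prop) : SimpleGraph (Arc G lt) where
  Adj p q := p ≠ q ∧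
    (p.1.1 = q.1.1 ∨ p.1.1 = q.1.2 ∨ p.1.2 = q.1.1 ∨ p.1.2 = q.1.2) ∧
    ¬ (p.1.1 = q.1.1 ∧ ¬ G.Adj p.1.2 q.1.2)
  symm := by
    constructor
    rintro p q ⟨h1, h2, h3⟩
    refine ⟨h1.symm, ?_, fun hc => h3 ⟨hc.1.symm, fun h => hc.2 (G.adj_symm h)⟩⟩
    rcases h2 with h | h | h | h
    · exact Or.inl h.symm
    · exact Or.inr (Or.inr (Or.inl h.symm))
    · exact Or.inr (Or.inl h.symm)
    · exact Or.inr (Or.inr (Or.inr h.symm))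
  loopless := ⟨fun p h => h.1 rfl⟩

/-- The line graph of the complement of `G`, with the edges of the complement
identified with the arcs of `G`: two distinct arcs are adjacent iff they share an endpoint. -/
def lineGraphArc {V : Type*} (G : SimpleGraph V) (lt : V → V → Prop) :
    SimpleGraph (Arc G lt) where
  Adj p q := p ≠ q ∧
    (p.1.1 = q.1.1 ∨ p.1.1 = q.1.2 ∨ p.1.2 = q.1.1 ∨ p.1.2 = q.1.2)
  symm := by
    constructor
    rintro p q ⟨h1, h2⟩
    refine ⟨h1.symm, ?_⟩
    rcases h2 with h | h | h | h
    · exact Or.inl h.symm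
    · exact Or.inr (Or.inr (Or.inl h.symm))
    · exact Or.inr (Or.inl h.symm)
    · exact Or.inr (Or.inr (Or.inr h.symm))
  loopless := ⟨fun p h => h.1 rfl⟩

/-- The independence number of `H` is at most 2. -/
def AlphaLeTwo {W : Type*} (H : SimpleGraph W) : Prop :=
  ∀ s : Set W, IsStableSet H s → s.ncard ≤ 2

/-- The chromatic number of a graph, as a natural number. -/
noncomputable def chromNum {W : Type*} (H : SimpleGraph W) : ℕ :=
  sInf {n : ℕ | ∃ c : W → ℕ, ProperColoring H c ∧ ∀ v, c v < n}

/-- `H` contains a copy of `F` as a (not necessarily induced) subgraph. -/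
def ContainsCopy {α β : Type*} (F : SimpleGraph α) (H : SimpleGraph β) : Prop :=
  ∃ f : α → β, Function.Injective f ∧ ∀ a b, F.Adj a b → H.Adj (f a) (f b)

/-- `H` contains an induced copy of `F`. -/
def ContainsInducedCopy {α β : Type*} (F : SimpleGraph α) (H : SimpleGraph β) : Prop :=
  ∃ f : α → β, Function.Injective f ∧ ∀ a b, H.Adj (f a) (f b) ↔ F.Adj a b

/-- The paw: a triangle `{0,1,2}` plus the vertex `3` adjacent only to `2`. -/
def pawGraph : SimpleGraph (Fin 4) :=
  SimpleGraph.fromEdgeSet {s(0, 1), s(0, 2), s(1, 2), s(2, 3)}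

/-- The kite: the paw plus the vertex `4` adjacent only to `3` (the paw's degree-1 vertex). -/
def kiteGraph : SimpleGraph (Fin 5) :=
  SimpleGraph.fromEdgeSet {s(0, 1), s(0, 2), s(1, 2), s(2, 3), s(3, 4)}

/-- The claw `K_{1,3}`: vertex `0` adjacent to `1`, `2`, `3`. -/
def clawGraph : SimpleGraph (Fin 4) :=
  SimpleGraph.fromEdgeSet {s(0, 1), s(0, 2), s(0, 3)}

/-- A graph is claw-free if it has no induced copy of `K_{1,3}`. -/
def ClawFree {W : Type*} (H : SimpleGraph W) : Prop :=
  ¬ ContainsInducedCopy clawGraph H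

/-- A graph is quasi-line if the neighborhood of every vertex can be partitioned
into two cliques. -/
def QuasiLine {W : Type*} (H : SimpleGraph W) : Prop :=
  ∀ v : W, ∃ K₁ K₂ : Set W, Disjoint K₁ K₂ ∧ K₁ ∪ K₂ = {w | H.Adj v w} ∧
    H.IsClique K₁ ∧ H.IsClique K₂

/-- A graph is hypomatchable if deleting any vertex leaves a graph with a perfect matching. -/
def Hypomatchable {W : Type*} (H : SimpleGraph W) : Prop :=
  ∀ u : W, ∃ M : (H.induce {v | v ≠ u}).Subgraph, M.IsPerfectMatching

/-- A graph is 2-connected: connected, at least 3 vertices, and deleting any vertex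
leaves it connected. -/
def TwoConnected {W : Type*} [Fintype W] (H : SimpleGraph W) : Prop :=
  H.Connected ∧ 3 ≤ Fintype.card W ∧ ∀ u : W, (H.induce {v | v ≠ u}).Connected

/-- A set of arcs is a matching of the complement of `G`: no two distinct arcs share
an endpoint. -/
def IsMatchingArcSet {V : Type*} (G : SimpleGraph V) (lt : V → V → Prop)
    (m : Set (Arc G lt)) : Prop :=
  ∀ p ∈ m, ∀ q ∈ m, p ≠ q →
    ¬ (p.1.1 = q.1.1 ∨ p.1.1 = q.1.2 ∨ p.1.2 = q.1.1 ∨ p.1.2 = q.1.2)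

/-- The matching polytope of the complement of `G`, viewed in `ℝ^A` via the
identification of edges of the complement with arcs. -/
noncomputable def MATCHarcs {V : Type*} (G : SimpleGraph V) (lt : V → V → Prop) :
    Set (Arc G lt → ℝ) :=
  convexHull ℝ {x | ∃ m : Set (Arc G lt), IsMatchingArcSet G lt m ∧ x = m.indicator 1}

/-- Restriction of a vector indexed by arcs of `G` to the arcs of an induced subgraph. -/
def restrictVec {V : Type*} (G : SimpleGraph V) (lt : V → V → Prop) (W : Set V)
    (x : Arc G lt → ℝ) : Arc (G.induce W) (fun a b => lt ↑a ↑b) → ℝ :=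
  fun a => x ⟨(↑a.1.1, ↑a.1.2), a.2.1, a.2.2⟩

/-!
For a proper coloring `c`, the arcs counted by the representative vector inside `S` join the
representative of a color class to another vertex of that class. Since `α(G[S]) ≤ 2`, a color
class meets `S` in at most two vertices, so each class contributes at most one such arc and these
arcs are pairwise vertex-disjoint. Hence there are at most `|S| / 2` of them, i.e. at most
`(|S| - 1) / 2` as `|S|` is odd. The inequality is linear, so it extends from the vertices of
`COL≺(G)` to their convex hull.
-/

section OddSet

variable {V : Type*}

lemma two_mul_card_le_of_pairwiseDisjoint {ι α : Type*} [DecidableEq α] {T : Finset ι}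
    {S : Finset α} {e : ι → Finset α} (hcard : ∀ i ∈ T, (e i).card = 2)
    (hsub : ∀ i ∈ T, e i ⊆ S) (hdisj : (T : Set ι).PairwiseDisjoint e) :
    2 * T.card ≤ S.card :=
  calc 2 * T.card = ∑ i ∈ T, (e i).card := by
        rw [Finset.sum_congr rfl hcard, Finset.sum_const, smul_eq_mul, mul_comm]
    _ = (T.biUnion e).card := (Finset.card_biUnion hdisj).symm
    _ ≤ S.card := Finset.card_le_card (Finset.biUnion_subset.mpr hsub)

lemma AlphaLeTwo.adj_of_ne {W : Type*} {H : SimpleGraph W} (hα : AlphaLeTwo H) {u v w : W}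
    (huv : u ≠ v) (huw : u ≠ w) (hvw : v ≠ w) : H.Adj u v ∨ H.Adj u w ∨ H.Adj v w := by
  by_contra! hn
  have hstable : IsStableSet H {u, v, w} := by
    rintro a (rfl | rfl | rfl) b (rfl | rfl | rfl) <;> simp_all [SimpleGraph.adj_comm]
  have := hα _ hstable
  rw [Set.ncard_eq_three.mpr ⟨u, v, w, huv, huw, hvw, rfl⟩] at this
  omega

lemma ProperColoring.eq_or_eq_of_color_eq {G : SimpleGraph V} {S : Set V} {c : V → ℕ}
    (hc : ProperColoring G c) (hα : AlphaLeTwo (G.induce S)) {u v w : V} (hu : u ∈ S)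
    (hv : v ∈ S) (hw : w ∈ S) (huv : c u = c v) (huw : c u = c w) :
    u = v ∨ u = w ∨ v = w := by
  by_contra! hne
  obtain ⟨huv', huw', hvw'⟩ := hne
  rcases hα.adj_of_ne (u := ⟨u, hu⟩) (v := ⟨v, hv⟩) (w := ⟨w, hw⟩)
    (Subtype.coe_ne_coe.mp huv') (Subtype.coe_ne_coe.mp huw') (Subtype.coe_ne_coe.mp hvw')
    with h | h | h
  · exact hc _ _ h huv
  · exact hc _ _ h huw
  · exact hc _ _ h (huv.symm.trans huw)

lemma IsClassRep.eq {lt : V → V → Prop} [Std.Asymm lt] {c : V → ℕ} {u v : V}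
    (hu : IsClassRep lt c u) (hv : IsClassRep lt c v) (h : c u = c v) : u = v := by
  rcases hu v h.symm with huv | huv
  · exact huv
  rcases hv u h with hvu | hvu
  · exact hvu.symm
  exact absurd hvu (asymm huv)

lemma Arc.fst_ne_snd {G : SimpleGraph V} {lt : V → V → Prop} [Std.Irrefl lt] (a : Arc G lt) :
    a.1.1 ≠ a.1.2 :=
  fun h => irrefl a.1.1 (h ▸ a.2.1 : lt a.1.1 a.1.1)

def IsRepArc {G : SimpleGraph V} (lt : V → V → Prop) (c : V → ℕ) (a : Arc G lt) : Prop :=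
  c a.1.1 = c a.1.2 ∧ IsClassRep lt c a.1.1

/-- Within a color class the representative is unique and, since the class meets `S` in at
most two vertices, so is the second end. -/
lemma pairwiseDisjoint_repArcs [DecidableEq V] {G : SimpleGraph V} {lt : V → V → Prop}
    [Std.Asymm lt]
    {S : Set V} {c : V → ℕ} (hc : ProperColoring G c) (hα : AlphaLeTwo (G.induce S)) :
    {a : Arc G lt | a.1.1 ∈ S ∧ a.1.2 ∈ S ∧ IsRepArc lt c a}.PairwiseDisjoint
      (fun a => ({a.1.1, a.1.2} : Finset V)) := by
  rintro a ⟨ha₁, ha₂, hac, har⟩ b ⟨hb₁, hb₂, hbc, hbr⟩ hab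
  by_cases hcol : c a.1.1 = c b.1.1
  · have hfst : a.1.1 = b.1.1 := har.eq hbr hcol
    have hsnd : a.1.2 = b.1.2 := by
      rcases hc.eq_or_eq_of_color_eq hα ha₁ ha₂ hb₂ hac (hcol.trans hbc) with h | h | h
      · exact absurd h a.fst_ne_snd
      · exact absurd (hfst.symm.trans h) b.fst_ne_snd
      · exact h
    exact absurd (Subtype.ext (Prod.ext hfst hsnd)) hab
  · rw [Function.onFun, Finset.disjoint_left]
    intro v hva hvb
    simp only [Finset.mem_insert, Finset.mem_singleton] at hva hvb
    have hva' : c v = c a.1.1 := by rcases hva with rfl | rfl <;> simp [hac]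
    have hvb' : c v = c b.1.1 := by rcases hvb with rfl | rfl <;> simp [hbc]
    exact hcol (hva'.symm.trans hvb')

lemma sum_repVec_le_of_alphaLeTwo [DecidableEq V] {G : SimpleGraph V} {lt : V → V → Prop}
    [Fintype (Arc G lt)] [Std.Asymm lt] (S : Finset V) (hodd : Odd S.card)
    (hα : AlphaLeTwo (G.induce (↑S : Set V))) {c : V → ℕ} (hc : ProperColoring G c) :
    (∑ a : Arc G lt, if a.1.1 ∈ S ∧ a.1.2 ∈ S then repVec G lt c a else 0) ≤
      ((S.card : ℝ) - 1) / 2 := by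
  set T := Finset.univ.filter fun a : Arc G lt => a.1.1 ∈ S ∧ a.1.2 ∈ S ∧ IsRepArc lt c a
  have hsum :
      (∑ a : Arc G lt, if a.1.1 ∈ S ∧ a.1.2 ∈ S then repVec G lt c a else 0) = T.card := by
    simp only [repVec, T, IsRepArc, ← ite_and, and_assoc, Finset.sum_boole]
    congr
  have hT : 2 * T.card ≤ S.card :=
    two_mul_card_le_of_pairwiseDisjoint (e := fun a => ({a.1.1, a.1.2} : Finset V))
      (fun a _ => Finset.card_pair a.fst_ne_snd)
      (fun a ha => by simp_all [T, Finset.insert_subset_iff])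
      ((pairwiseDisjoint_repArcs hc hα).subset (by intro a; simp [T]))
  obtain ⟨k, hk⟩ := hodd
  rw [hsum, hk]
  push_cast
  have : (T.card : ℝ) ≤ k := by exact_mod_cast (show T.card ≤ k by omega)
  linarith

end OddSet

/-- if `|S|` is odd and `α(G[S]) ≤ 2`, then every point of `COL≺(G)` satisfies
the odd-set inequality over `S`. -/
theorem statement9 {V : Type*} [Fintype V] [DecidableEq V]
    (G : SimpleGraph V) [DecidableRel G.Adj]
    (lt : V → V → Prop) [DecidableRel lt] (hlt : IsStrictTotalOrder V lt)
    (S : Finset V) (hodd : Odd S.card) (hα : AlphaLeTwo (G.induce (↑S : Set V)))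
    (x : Arc G lt → ℝ) (hx : x ∈ COL G lt) :
    (∑ a : Arc G lt, if a.1.1 ∈ S ∧ a.1.2 ∈ S then x a else 0) ≤
      ((S.card : ℝ) - 1) / 2 := by
  have hlin : IsLinearMap ℝ fun y : Arc G lt → ℝ =>
      ∑ a : Arc G lt, if a.1.1 ∈ S ∧ a.1.2 ∈ S then y a else 0 := by
    simp only [← Finset.sum_filter]
    exact ⟨fun y z => Finset.sum_add_distrib, fun r y => (Finset.mul_sum _ _ _).symm⟩
  refine convexHull_min ?_ (convex_halfSpace_le hlin _) hx
  rintro _ ⟨c, hc, rfl⟩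
  exact sum_repVec_le_of_alphaLeTwo (lt := lt) S hodd hα hc
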